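/- arXiv:1403.5830 — 3 statements merged into one kernel-verified Lean document; each statement's English description precedes it below -/
import Mathlib

section
/- Suppose a column falls in steps, where each variable gadget i contributes dᵢ cells with dᵢ ≡ 0 (mod 6) if variable i is false or does not occur in the clause, and dᵢ ≡ 2 (mod 6) if variable i is true and occurs in the clause. If the clause contains at most 3 variables, then the total fall is ≡ 2 (mod 6) iff exactly one variable of the clause is true. -/
open Finset

theorem Int.sum_modEq_card_mul {ι : Type*} [Fintype ι] [DecidableEq ι]
    (s : Finset ι) (d : ι → ℤ) {a m : ℤ} (hs : ∀ i ∈ s, d i ≡ a [ZMOD m])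
    (hsc : ∀ i ∉ s, d i ≡ 0 [ZMOD m]) :
    ∑ i, d i ≡ #s * a [ZMOD m] := by
  rw [← sum_add_sum_compl s d]
  calc ∑ i ∈ s, d i + ∑ i ∈ sᶜ, d i
      ≡ ∑ _i ∈ s, a + ∑ _i ∈ sᶜ, (0 : ℤ) [ZMOD m] :=
        (Int.ModEq.sum hs).add (Int.ModEq.sum fun i hi => hsc i (mem_compl.mp hi))
    _ = #s * a := by simp

theorem Int.two_mul_modEq_two_iff_of_le_three {k : ℕ} (hk : k ≤ 3) :
    2 * (k : ℤ) ≡ 2 [ZMOD 6] ↔ k = 1 := by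
  interval_cases k <;> decide

theorem total_fall_iff_exactly_one_true (n : ℕ) (τ : Fin n → Bool)
    (c : Finset (Fin n)) (hc : c.card ≤ 3) (d : Fin n → ℤ)
    (h0 : ∀ i, (τ i = false ∨ i ∉ c) → d i ≡ 0 [ZMOD 6])
    (h2 : ∀ i, τ i = true → i ∈ c → d i ≡ 2 [ZMOD 6]) :
    (∑ i, d i) ≡ 2 [ZMOD 6] ↔ (c.filter (fun i => τ i = true)).card = 1 := by
  set S := c.filter (fun i => τ i = true)
  have hsum : ∑ i, d i ≡ 2 * #S [ZMOD 6] := by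
    rw [mul_comm]
    refine Int.sum_modEq_card_mul S d (fun i hi => ?_) (fun i hi => h0 i ?_)
    · obtain ⟨hic, hτ⟩ := mem_filter.mp hi
      exact h2 i hτ hic
    · simp only [S, mem_filter, not_and, Bool.not_eq_true] at hi
      exact (em (i ∈ c)).imp hi id
  rw [← Int.two_mul_modEq_two_iff_of_le_three ((card_filter_le c _).trans hc)]
  exact ⟨hsum.symm.trans, hsum.trans⟩
end

section
/- Consider the coloring of ℤ² that assigns to column i the alternating sequence of two colors from the pair P(i mod 2), where P(0)={E,F} and P(1)={C,D}. In this coloring no three horizontally or vertically consecutive cells have the same color, and swapping any two adjacent cells never creates three consecutive equal colors. -/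
/-- The filler pattern: column `i` uses the color pair determined by `i % 2`
({E,F} encoded as 0,1 for even columns, {C,D} encoded as 2,3 for odd columns),
alternating within the column by row parity. -/
def fillerColor (i j : ℤ) : Fin 4 :=
  if i % 2 = 0 then (if j % 2 = 0 then 0 else 1)
  else (if j % 2 = 0 then 2 else 3)

/-- No three horizontally or vertically consecutive cells have the same color. -/
def NoMatch (c : ℤ → ℤ → Fin 4) : Prop :=
  (∀ i j : ℤ, ¬ (c i j = c (i + 1) j ∧ c (i + 1) j = c (i + 2) j)) ∧
  (∀ i j : ℤ, ¬ (c i j = c i (j + 1) ∧ c i (j + 1) = c i (j + 2)))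

/-- Swapping the contents of two cells. -/
def swapCells (c : ℤ → ℤ → Fin 4) (p q : ℤ × ℤ) : ℤ → ℤ → Fin 4 :=
  fun i j => if (i, j) = p then c q.1 q.2 else if (i, j) = q then c p.1 p.2 else c i j

lemma fillerColor_eq_iff (a b c d : ℤ) :
    fillerColor a b = fillerColor c d ↔ (a % 2 = c % 2 ∧ b % 2 = d % 2) := by
  unfold fillerColor
  have ha : a % 2 = 0 ∨ a % 2 = 1 := by omega
  have hb : b % 2 = 0 ∨ b % 2 = 1 := by omega
  have hc : c % 2 = 0 ∨ c % 2 = 1 := by omega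
  have hd : d % 2 = 0 ∨ d % 2 = 1 := by omega
  rcases ha with ha | ha <;> rcases hb with hb | hb <;>
    rcases hc with hc | hc <;> rcases hd with hd | hd <;>
    simp [ha, hb, hc, hd]

theorem filler_no_match_and_swap_safe :
    NoMatch fillerColor ∧
    ∀ p q : ℤ × ℤ, |p.1 - q.1| + |p.2 - q.2| = 1 →
      NoMatch (swapCells fillerColor p q) := by
  constructor
  · constructor <;> intro i j ⟨h1, h2⟩ <;>
      rw [fillerColor_eq_iff] at h1 h2 <;> omega
  · rintro ⟨p1, p2⟩ ⟨q1, q2⟩ hpq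
    simp only at hpq
    have hadj : (p1 = q1 ∧ (p2 = q2 + 1 ∨ q2 = p2 + 1)) ∨
        (p2 = q2 ∧ (p1 = q1 + 1 ∨ q1 = p1 + 1)) := by
      rcases abs_cases (p1 - q1) with ⟨h1, _⟩ | ⟨h1, _⟩ <;>
        rcases abs_cases (p2 - q2) with ⟨h2, _⟩ | ⟨h2, _⟩ <;> omega
    constructor <;> intro i j ⟨h1, h2⟩ <;>
      simp only [swapCells, Prod.mk.injEq] at h1 h2 <;>
      split_ifs at h1 h2 <;>
      rw [fillerColor_eq_iff] at h1 h2 <;> omega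
end

section
/- If column i uses colors only from pair Pᵢ and column i+1 uses colors only from pair Pᵢ₊₁ with Pᵢ ∩ Pᵢ₊₁ = ∅, then no horizontal match of three equal colors can span cells in both columns, and swapping a gem between columns i and i+1 places a color from Pᵢ into a column whose other cells are from Pᵢ₊₁ (and vice versa), so no vertical match of three equal colors is created by such a swap provided each column's colors alternate. -/
/-!
After a swap, a vertical match would need two equal vertical neighbours. The only new pairs of
neighbours involve the foreign gem, whose colour lies in the other column's disjoint pair; all
other pairs were already distinct because each column alternates.
-/

theorem Function.update_ne_update_add_one {α : Type*} {f : ℤ → α} (hf : ∀ j, f j ≠ f (j + 1))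
    {c : α} (hc : ∀ j, f j ≠ c) (k j : ℤ) :
    Function.update f k c j ≠ Function.update f k c (j + 1) := by
  rcases eq_or_ne j k with rfl | hjk
  · simpa using (hc (j + 1)).symm
  rcases eq_or_ne (j + 1) k with rfl | hjk'
  · simpa [hjk] using hc j
  · simpa [hjk, hjk'] using hf j

theorem disjoint_pairs_no_match (colA colB : ℤ → Fin 6) (P Q : Finset (Fin 6))
    (hPQ : Disjoint P Q)
    (hA : ∀ j, colA j ∈ P) (hB : ∀ j, colB j ∈ Q)
    (hAalt : ∀ j, colA j ≠ colA (j + 1)) (hBalt : ∀ j, colB j ≠ colB (j + 1)) :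
    -- no horizontal match of three equal colors can span both columns
    (∀ j, colA j ≠ colB j) ∧
    -- swapping the gems at row k between the two columns creates no vertical match
    (∀ k : ℤ,
      (∀ j, ¬ (((fun j => if j = k then colB k else colA j) j =
                 (fun j => if j = k then colB k else colA j) (j + 1)) ∧
               ((fun j => if j = k then colB k else colA j) (j + 1) =
                 (fun j => if j = k then colB k else colA j) (j + 2)))) ∧
      (∀ j, ¬ (((fun j => if j = k then colA k else colB j) j =
                 (fun j => if j = k then colA k else colB j) (j + 1)) ∧
               ((fun j => if j = k then colA k else colB j) (j + 1) =
                 (fun j => if j = k then colA k else colB j) (j + 2))))) := by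
  have hAB : ∀ a b, colA a ≠ colB b := fun a b =>
    Finset.disjoint_iff_ne.mp hPQ _ (hA a) _ (hB b)
  refine ⟨fun j => hAB j j, fun k => ⟨fun j h => ?_, fun j h => ?_⟩⟩
  · simp only [← Function.update_apply] at h
    exact Function.update_ne_update_add_one hAalt (fun j => hAB j k) k j h.1
  · simp only [← Function.update_apply] at h
    exact Function.update_ne_update_add_one hBalt (fun j => (hAB k j).symm) k j h.1
end
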